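/- arXiv:2007.11116 — 3 statements merged into one kernel-verified Lean document; each statement's English description precedes it below -/
import Mathlib

section
/- Under the assumptions of the hypercuboid design, L_c := (1/(r−1)) · r/(Σ_p r_p m_p/(m_p−1)) satisfies L_c ≤ (1/(r−1))·(1 − r/K), where K = Σ_p r_p m_p. -/
open Finset

/-- Hypercuboid coded load bound: `L_c ≤ (1/(r−1))·(1 − r/K)`. -/
theorem hypercuboid_coded_load_le (P : ℕ) (hP : 1 ≤ P) (rp mp : Fin P → ℕ)
    (hrp : ∀ p, 1 ≤ rp p) (hmp : ∀ p, 2 ≤ mp p)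
    (r K : ℕ) (hr : r = ∑ p, rp p) (hr2 : 2 ≤ r) (hK : K = ∑ p, rp p * mp p) :
    (1 / ((r : ℝ) - 1)) * ((r : ℝ) / (∑ p, (rp p : ℝ) * mp p / ((mp p : ℝ) - 1)))
      ≤ (1 / ((r : ℝ) - 1)) * (1 - (r : ℝ) / K) := by
  have ha : ∀ p, (1:ℝ) ≤ (rp p : ℝ) := fun p => by exact_mod_cast hrp p
  have hm : ∀ p, (2:ℝ) ≤ (mp p : ℝ) := fun p => by exact_mod_cast hmp p
  have hm1 : ∀ p, (0:ℝ) < (mp p : ℝ) - 1 := fun p => by linarith [hm p]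
  have hm0 : ∀ p, (0:ℝ) < (mp p : ℝ) := fun p => by linarith [hm p]
  have ha0 : ∀ p, (0:ℝ) < (rp p : ℝ) := fun p => by linarith [ha p]
  set S : ℝ := ∑ p, (rp p : ℝ) * mp p / ((mp p : ℝ) - 1) with hSdef
  set T : ℝ := ∑ p, (rp p : ℝ) * ((mp p : ℝ) - 1) / mp p with hTdef
  set U : ℝ := ∑ p, (rp p : ℝ) / mp p with hUdef
  have hrR : (r:ℝ) = ∑ p, (rp p : ℝ) := by rw [hr]; push_cast; ring
  have hKR : (K:ℝ) = ∑ p, (rp p : ℝ) * mp p := by rw [hK]; push_cast; ring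
  have hrpos : (0:ℝ) < r := by
    have : (2:ℝ) ≤ r := by exact_mod_cast hr2
    linarith
  have hr1 : (1:ℝ) < r := by
    have : (2:ℝ) ≤ r := by exact_mod_cast hr2
    linarith
  have hSpos : 0 < S := by
    apply Finset.sum_pos
    · intro p _
      exact div_pos (mul_pos (ha0 p) (hm0 p)) (hm1 p)
    · exact Finset.univ_nonempty_iff.mpr ⟨⟨0, hP⟩⟩
  have hKpos : (0:ℝ) < K := by
    rw [hKR]
    apply Finset.sum_pos
    · intro p _
      exact mul_pos (ha0 p) (hm0 p)
    · exact Finset.univ_nonempty_iff.mpr ⟨⟨0, hP⟩⟩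
  -- K - r ≥ r
  have hKr : (r:ℝ) ≤ (K:ℝ) - r := by
    have : (K:ℝ) - r = ∑ p, (rp p : ℝ) * ((mp p : ℝ) - 1) := by
      rw [hKR, hrR, ← Finset.sum_sub_distrib]
      apply Finset.sum_congr rfl
      intro p _; ring
    rw [this, hrR]
    apply Finset.sum_le_sum
    intro p _
    nlinarith [ha p, hm p]
  -- T = r - U
  have hTU : T = (r:ℝ) - U := by
    rw [hTdef, hUdef, hrR, ← Finset.sum_sub_distrib]
    apply Finset.sum_congr rfl
    intro p _
    have h2 : ((mp p : ℝ)) ≠ 0 := (hm0 p).ne'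
    field_simp
  -- Cauchy-Schwarz 1 : r^2 ≤ S * T
  have CS1 : (r:ℝ)^2 ≤ S * T := by
    have h := Finset.sum_mul_sq_le_sq_mul_sq Finset.univ
      (fun p => Real.sqrt ((rp p : ℝ) * mp p / ((mp p : ℝ) - 1)))
      (fun p => Real.sqrt ((rp p : ℝ) * ((mp p : ℝ) - 1) / mp p))
    have e1 : ∀ p : Fin P, Real.sqrt ((rp p : ℝ) * mp p / ((mp p : ℝ) - 1)) *
        Real.sqrt ((rp p : ℝ) * ((mp p : ℝ) - 1) / mp p) = (rp p : ℝ) := by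
      intro p
      have hne1 : ((mp p : ℝ)) - 1 ≠ 0 := (hm1 p).ne'
      have hne2 : ((mp p : ℝ)) ≠ 0 := (hm0 p).ne'
      rw [← Real.sqrt_mul (div_nonneg (by positivity) (hm1 p).le)]
      have : (rp p : ℝ) * mp p / ((mp p : ℝ) - 1) * ((rp p : ℝ) * ((mp p : ℝ) - 1) / mp p)
          = (rp p : ℝ)^2 := by
        field_simp
      rw [this, Real.sqrt_sq (le_of_lt (ha0 p))]
    have e2 : ∀ p : Fin P, Real.sqrt ((rp p : ℝ) * mp p / ((mp p : ℝ) - 1)) ^ 2 =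
        (rp p : ℝ) * mp p / ((mp p : ℝ) - 1) := by
      intro p; exact Real.sq_sqrt (div_nonneg (by positivity) (hm1 p).le)
    have e3 : ∀ p : Fin P, Real.sqrt ((rp p : ℝ) * ((mp p : ℝ) - 1) / mp p) ^ 2 =
        (rp p : ℝ) * ((mp p : ℝ) - 1) / mp p := by
      intro p
      apply Real.sq_sqrt
      have := hm1 p; have := hm0 p; have := ha0 p
      positivity
    simp only [e2, e3] at h
    rw [Finset.sum_congr rfl (fun p _ => e1 p)] at h
    rw [hrR, hSdef, hTdef]
    exact h
  -- Cauchy-Schwarz 2 : r^2 ≤ K * U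
  have CS2 : (r:ℝ)^2 ≤ (K:ℝ) * U := by
    have h := Finset.sum_mul_sq_le_sq_mul_sq Finset.univ
      (fun p => Real.sqrt ((rp p : ℝ) * mp p))
      (fun p => Real.sqrt ((rp p : ℝ) / mp p))
    have e1 : ∀ p : Fin P, Real.sqrt ((rp p : ℝ) * mp p) *
        Real.sqrt ((rp p : ℝ) / mp p) = (rp p : ℝ) := by
      intro p
      rw [← Real.sqrt_mul (by positivity)]
      have hne2 : ((mp p : ℝ)) ≠ 0 := (hm0 p).ne'
      have : (rp p : ℝ) * mp p * ((rp p : ℝ) / mp p) = (rp p : ℝ)^2 := by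
        field_simp
      rw [this, Real.sqrt_sq (le_of_lt (ha0 p))]
    have e2 : ∀ p : Fin P, Real.sqrt ((rp p : ℝ) * mp p) ^ 2 = (rp p : ℝ) * mp p := by
      intro p; exact Real.sq_sqrt (by positivity)
    have e3 : ∀ p : Fin P, Real.sqrt ((rp p : ℝ) / mp p) ^ 2 = (rp p : ℝ) / mp p := by
      intro p; exact Real.sq_sqrt (by positivity)
    simp only [e2, e3] at h
    rw [Finset.sum_congr rfl (fun p _ => e1 p)] at h
    rw [hrR, hKR, hUdef]
    exact h
  -- combine: r*K ≤ S*(K - r)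
  have key : (r:ℝ) * K ≤ S * ((K:ℝ) - r) := by
    have h1 : (K:ℝ) * T ≤ (K:ℝ) * r - (r:ℝ)^2 := by
      rw [hTU]; nlinarith [CS2]
    have h2 : (K:ℝ) * (r:ℝ)^2 ≤ (K:ℝ) * (S * T) :=
      mul_le_mul_of_nonneg_left CS1 hKpos.le
    have h3 : S * ((K:ℝ) * T) ≤ S * ((K:ℝ) * r - (r:ℝ)^2) :=
      mul_le_mul_of_nonneg_left h1 hSpos.le
    have h4 : (r:ℝ) * ((r:ℝ) * K) ≤ (r:ℝ) * (S * ((K:ℝ) - r)) := by nlinarith [h2, h3]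
    exact le_of_mul_le_mul_left h4 hrpos
  have hmain : (r:ℝ) / S ≤ 1 - (r:ℝ) / K := by
    have h1 : 1 - (r:ℝ) / K = ((K:ℝ) - r) / K := by field_simp
    rw [h1, div_le_div_iff₀ hSpos hKpos]
    linarith [key]
  have hinv : 0 ≤ 1 / ((r:ℝ) - 1) := by
    apply div_nonneg zero_le_one
    linarith
  exact mul_le_mul_of_nonneg_left hmain hinv
end

section
/- If the fractions β_p = r_p/K, β = r/K ∈ (0,1) and file fractions 1/m_p are held constant and not all m_p are equal, then the ratio L_c/L_1 tends, as K → ∞ (equivalently r → ∞ with r/K = β fixed), to (1/(1−β)) · 1/(Σ_p (β_p/β)·m_p/(m_p−1)), which is strictly less than 1. -/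
open Finset Filter

private lemma cs_aux_le (u v a b : ℝ) (hu : 0 < u) (hv : 0 < v) (ha : 0 < a) (hb : 0 < b) :
    2 * (u * v) ≤ u / a * (v * b) + u * a * (v / b) := by
  have h : u / a * (v * b) + u * a * (v / b) - 2 * (u * v) = u * v * (a - b) ^ 2 / (a * b) := by
    field_simp; ring
  have h2 : 0 ≤ u * v * (a - b) ^ 2 / (a * b) := by positivity
  linarith

private lemma cs_aux_lt (u v a b : ℝ) (hu : 0 < u) (hv : 0 < v) (ha : 0 < a) (hb : 0 < b)
    (hab : a ≠ b) : 2 * (u * v) < u / a * (v * b) + u * a * (v / b) := by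
  have h : u / a * (v * b) + u * a * (v / b) - 2 * (u * v) = u * v * (a - b) ^ 2 / (a * b) := by
    field_simp; ring
  have hsq : 0 < (a - b) ^ 2 := by
    have : a - b ≠ 0 := sub_ne_zero.mpr hab
    positivity
  have h2 : 0 < u * v * (a - b) ^ 2 / (a * b) :=
    div_pos (mul_pos (mul_pos hu hv) hsq) (mul_pos ha hb)
  linarith

/-- For fixed fractions `β_p = r_p/K`, `β = r/K` and fixed `m_p` (not all equal),
the ratio `L_c/L_1` tends, as `K → ∞`, to
`(1/(1−β)) · 1/(Σ_p (β_p/β)·m_p/(m_p−1))`, which is strictly less than `1`. -/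
theorem het_ratio_limit_lt_one (P : ℕ) (hP : 2 ≤ P) (m βp : Fin P → ℝ)
    (hm : ∀ p, 1 < m p) (hne : ∃ p q, m p ≠ m q)
    (hβp : ∀ p, 0 < βp p) (β : ℝ) (hβ : β = ∑ p, βp p)
    (hsum : ∑ p, βp p * m p = 1) :
    Tendsto
      (fun K : ℝ =>
        ((1 / (β * K - 1)) * ((β * K) / (∑ p, (βp p * K) * m p / (m p - 1))))
          / ((1 / (β * K)) * (1 - β * K / K)))
      atTop
      (nhds ((1 / (1 - β)) * (1 / (∑ p, (βp p / β) * (m p / (m p - 1))))))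
    ∧ (1 / (1 - β)) * (1 / (∑ p, (βp p / β) * (m p / (m p - 1)))) < 1 := by
  have hPne : Nonempty (Fin P) := ⟨⟨0, by omega⟩⟩
  have hm1 : ∀ p, 0 < m p - 1 := fun p => sub_pos.mpr (hm p)
  have hβpos : 0 < β := by
    rw [hβ]; exact Finset.sum_pos (fun p _ => hβp p) Finset.univ_nonempty
  have hβlt : β < 1 := by
    rw [hβ, ← hsum]
    apply Finset.sum_lt_sum_of_nonempty Finset.univ_nonempty
    intro p _
    nlinarith [hβp p, hm p]
  set S : ℝ := ∑ p, βp p * m p / (m p - 1) with hS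
  have hSpos : 0 < S := by
    apply Finset.sum_pos _ Finset.univ_nonempty
    intro p _
    have := hβp p; have := hm p; have := hm1 p
    positivity
  set A : ℝ := ∑ p, βp p / (m p - 1) with hA
  have hApos : 0 < A := by
    apply Finset.sum_pos _ Finset.univ_nonempty
    intro p _
    exact div_pos (hβp p) (hm1 p)
  have hB : (∑ p, βp p * (m p - 1)) = 1 - β := by
    have h : (∑ p, βp p * (m p - 1)) = (∑ p, βp p * m p) - ∑ p, βp p := by
      rw [← Finset.sum_sub_distrib]
      exact Finset.sum_congr rfl fun p _ => by ring
    rw [h, hsum, hβ]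
  -- strict Cauchy–Schwarz
  have key : β ^ 2 < A * (1 - β) := by
    rw [← hB, hβ]
    obtain ⟨p₀, q₀, hpq⟩ := hne
    have e1 : (∑ p, βp p) ^ 2 = ∑ p, ∑ q, βp p * βp q := by
      rw [sq, Finset.sum_mul_sum]
    have e2 : A * (∑ p, βp p * (m p - 1))
        = ∑ p, ∑ q, βp p / (m p - 1) * (βp q * (m q - 1)) := by
      rw [hA, Finset.sum_mul_sum]
    have e3 : (∑ p, βp p * (m p - 1)) * A
        = ∑ p, ∑ q, βp p * (m p - 1) * (βp q / (m q - 1)) := by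
      rw [hA, Finset.sum_mul_sum]
    have h2 : 2 * ((∑ p, βp p) ^ 2) < 2 * (A * (∑ p, βp p * (m p - 1))) := by
      have : 2 * (A * (∑ p, βp p * (m p - 1)))
          = ∑ p, ∑ q, (βp p / (m p - 1) * (βp q * (m q - 1))
              + βp p * (m p - 1) * (βp q / (m q - 1))) := by
        rw [two_mul]
        nth_rewrite 2 [mul_comm]
        rw [e2, e3, ← Finset.sum_add_distrib]
        exact Finset.sum_congr rfl fun p _ => (Finset.sum_add_distrib).symm
      rw [this, e1, Finset.mul_sum]
      apply Finset.sum_lt_sum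
      · intro p _
        rw [Finset.mul_sum]
        apply Finset.sum_le_sum
        intro q _
        exact cs_aux_le (βp p) (βp q) (m p - 1) (m q - 1) (hβp p) (hβp q) (hm1 p) (hm1 q)
      · refine ⟨p₀, Finset.mem_univ _, ?_⟩
        rw [Finset.mul_sum]
        apply Finset.sum_lt_sum
        · intro q _
          exact cs_aux_le (βp p₀) (βp q) (m p₀ - 1) (m q - 1) (hβp p₀) (hβp q) (hm1 p₀) (hm1 q)
        · refine ⟨q₀, Finset.mem_univ _, ?_⟩
          exact cs_aux_lt (βp p₀) (βp q₀) (m p₀ - 1) (m q₀ - 1) (hβp p₀) (hβp q₀) (hm1 p₀)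
            (hm1 q₀) (fun h => hpq (by linarith))
    linarith
  have hSA : S = β + A := by
    rw [hS, hA, hβ, ← Finset.sum_add_distrib]
    refine Finset.sum_congr rfl fun p _ => ?_
    have h := (hm1 p).ne'
    field_simp
    ring
  have hQ : (∑ p, (βp p / β) * (m p / (m p - 1))) = S / β := by
    rw [hS, Finset.sum_div]
    exact Finset.sum_congr rfl fun p _ => by ring
  have h1β : (0:ℝ) < 1 - β := by linarith
  have hLeq : (1 / (1 - β)) * (1 / (∑ p, (βp p / β) * (m p / (m p - 1))))
      = β / ((1 - β) * S) := by
    rw [hQ, one_div_div]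
    field_simp
  constructor
  · rw [hLeq]
    -- the limit of K/(β*K-1) is 1/β
    have hlim : Tendsto (fun K : ℝ => K / (β * K - 1)) atTop (nhds (1 / β)) := by
      have h0 : Tendsto (fun K : ℝ => 1 / (β - 1 / K)) atTop (nhds (1 / β)) := by
        have hd : Tendsto (fun K : ℝ => β - 1 / K) atTop (nhds β) := by
          have := tendsto_inv_atTop_zero (𝕜 := ℝ)
          simpa [one_div] using tendsto_const_nhds.sub this
        exact (tendsto_const_nhds.div hd hβpos.ne')
      apply h0.congr'
      filter_upwards [eventually_gt_atTop (1/β), eventually_gt_atTop (0:ℝ)] with K hK1 hK0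
      have hden : 0 < β * K - 1 := by nlinarith [(div_lt_iff₀ hβpos).mp hK1]
      have hpos2 : 0 < β - 1 / K := by
        rw [sub_pos, div_lt_iff₀ hK0]
        nlinarith [(div_lt_iff₀ hβpos).mp hK1]
      rw [div_eq_div_iff hpos2.ne' hden.ne']
      field_simp
    have := hlim.const_mul (β ^ 2 / ((1 - β) * S))
    have hval : β ^ 2 / ((1 - β) * S) * (1 / β) = β / ((1 - β) * S) := by
      field_simp
    rw [hval] at this
    apply this.congr'
    filter_upwards [eventually_gt_atTop (1/β), eventually_gt_atTop (0:ℝ)] with K hK1 hK0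
    have hden : 0 < β * K - 1 := by nlinarith [(div_lt_iff₀ hβpos).mp hK1]
    have hsumK : (∑ p, (βp p * K) * m p / (m p - 1)) = K * S := by
      rw [hS, Finset.mul_sum]
      exact Finset.sum_congr rfl fun p _ => by ring
    rw [hsumK]
    field_simp
  · rw [hLeq, div_lt_one (mul_pos h1β hSpos), hSA]
    nlinarith [key]
end

section
/- The uncoded communication load of the hypercuboid design is L_u = r / (Σ_{p=1}^P r_p m_p/(m_p−1)): each node k in class C_p has |M_k| = N/m_p locally available files and |W_k| = η_2 Y/(m_p−1) functions, and (1/(QN)) Σ_{k∈[K]} |W_k|·(N − |M_k|) simplifies to this expression. -/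
open Finset

/-- Uncoded communication load of the hypercuboid design:
`(1/(QN)) Σ_k |W_k|(N−|M_k|) = r/(Σ_p r_p m_p/(m_p−1))`, where class `C_p` has
`r_p m_p` nodes each with `|M_k| = N/m_p` files and `|W_k| = η₂Y/(m_p−1)` functions. -/
theorem hypercuboid_uncoded_load (P : ℕ) (hP : 1 ≤ P) (rp mp : Fin P → ℕ)
    (hrp : ∀ p, 1 ≤ rp p) (hmp : ∀ p, 2 ≤ mp p)
    (r : ℕ) (hr : r = ∑ p, rp p) (hr2 : 2 ≤ r)
    (η₁ η₂ X : ℕ) (hη₁ : 1 ≤ η₁) (hη₂ : 1 ≤ η₂)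
    (hX : X = ∏ p, mp p ^ rp p)
    (Y : ℕ) (hY : Y = Finset.univ.lcm fun p => mp p - 1)
    (Q N : ℝ) (hQ : Q = η₂ * Y * ∑ p, (rp p : ℝ) * mp p / ((mp p : ℝ) - 1))
    (hN : N = η₁ * X) :
    (1 / (Q * N)) *
        (∑ p, ((rp p : ℝ) * mp p) * ((η₂ : ℝ) * Y / ((mp p : ℝ) - 1)) * (N - N / mp p))
      = (r : ℝ) / ∑ p, (rp p : ℝ) * mp p / ((mp p : ℝ) - 1) := by
  have hmR : ∀ p, (2 : ℝ) ≤ (mp p : ℝ) := fun p => by exact_mod_cast hmp p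
  have hm0 : ∀ p, (mp p : ℝ) ≠ 0 := fun p => by linarith [hmR p]
  have hm1 : ∀ p, (mp p : ℝ) - 1 ≠ 0 := fun p => by linarith [hmR p]
  -- Y ≠ 0
  have hY0 : Y ≠ 0 := by
    rw [hY]
    simp only [Ne, Finset.lcm_eq_zero_iff]
    rintro ⟨a, -, ha⟩
    have ha' : mp a - 1 = 0 := ha
    have := hmp a
    omega
  have hYR : (Y : ℝ) ≠ 0 := Nat.cast_ne_zero.mpr hY0
  have hη₂R : (η₂ : ℝ) ≠ 0 := Nat.cast_ne_zero.mpr (by omega)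
  -- N ≠ 0
  have hX0 : X ≠ 0 := by
    rw [hX]
    exact Finset.prod_ne_zero_iff.mpr fun p _ => pow_ne_zero _ (by have := hmp p; omega)
  have hN0 : N ≠ 0 := by
    rw [hN]
    positivity
  -- sum positive
  have hSpos : 0 < ∑ p, (rp p : ℝ) * mp p / ((mp p : ℝ) - 1) := by
    apply Finset.sum_pos
    · intro p _
      have h1 : (0:ℝ) < (rp p : ℝ) := by exact_mod_cast hrp p
      have h2 : (0:ℝ) < (mp p : ℝ) - 1 := by linarith [hmR p]
      have h3 : (0:ℝ) < (mp p : ℝ) := by linarith [hmR p]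
      positivity
    · exact Finset.univ_nonempty_iff.mpr ⟨⟨0, hP⟩⟩
  have hS0 : (∑ p, (rp p : ℝ) * mp p / ((mp p : ℝ) - 1)) ≠ 0 := ne_of_gt hSpos
  have hterm : ∀ p : Fin P,
      ((rp p : ℝ) * mp p) * ((η₂ : ℝ) * Y / ((mp p : ℝ) - 1)) * (N - N / mp p)
        = (η₂ : ℝ) * Y * N * rp p := by
    intro p
    field_simp [hm0 p, hm1 p]
  rw [Finset.sum_congr rfl fun p _ => hterm p, ← Finset.mul_sum]
  have hrR : (∑ p, (rp p : ℝ)) = (r : ℝ) := by rw [hr]; push_cast; ring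
  rw [hrR, hQ]
  have hQ0 : (η₂ : ℝ) * Y * (∑ p, (rp p : ℝ) * mp p / ((mp p : ℝ) - 1)) ≠ 0 := by
    exact mul_ne_zero (mul_ne_zero hη₂R hYR) hS0
  field_simp
end
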